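/- Let u be a smooth solution of ∂_t²u − Δu = f on R^{1+2}. Then in the region { (t,x) : |x| ≤ 2t, t ≥ 1 }, the wave operator identity −□ = ((t−r)(t+r)/t²) ∂_t∂_t + (x^i/t²) ∂_t H_i − (1/t) ∂^i H_i + (2/t)∂_t − (x^i/t²) ∂_i holds when applied to u, where H_i = t∂_i + x_i∂_t and r = |x|, and consequently |∂_t∂_t u| ≤ C ( Σ_{|I|≤1} ⟨r−t⟩^{-1} |∂Γ^I u| + (t²/(⟨r−t⟩⟨r+t⟩)) |f| ) for r ≤ 2t, where Γ ranges over {∂_α, Ω, H_i} and |∂v| = max_α |∂_α v|. -/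

import Mathlib

noncomputable def pt (m : ℝ → ℝ → ℝ → ℝ) (t x y : ℝ) : ℝ := deriv (fun s => m s x y) t
noncomputable def px (m : ℝ → ℝ → ℝ → ℝ) (t x y : ℝ) : ℝ := deriv (fun s => m t s y) x
noncomputable def py (m : ℝ → ℝ → ℝ → ℝ) (t x y : ℝ) : ℝ := deriv (fun s => m t x s) y

def IsSmoothFn (m : ℝ → ℝ → ℝ → ℝ) : Prop :=
  ContDiff ℝ (⊤ : ℕ∞) (fun p : ℝ × ℝ × ℝ => m p.1 p.2.1 p.2.2)

noncomputable def pd (α : Fin 3) : (ℝ → ℝ → ℝ → ℝ) → ℝ → ℝ → ℝ → ℝ := ![pt, px, py] α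

noncomputable def Om (m : ℝ → ℝ → ℝ → ℝ) : ℝ → ℝ → ℝ → ℝ :=
  fun t x y => x * py m t x y - y * px m t x y

noncomputable def Sc (m : ℝ → ℝ → ℝ → ℝ) : ℝ → ℝ → ℝ → ℝ :=
  fun t x y => t * pt m t x y + x * px m t x y + y * py m t x y

noncomputable def H1 (m : ℝ → ℝ → ℝ → ℝ) : ℝ → ℝ → ℝ → ℝ :=
  fun t x y => t * px m t x y + x * pt m t x y

noncomputable def H2 (m : ℝ → ℝ → ℝ → ℝ) : ℝ → ℝ → ℝ → ℝ :=
  fun t x y => t * py m t x y + y * pt m t x y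

noncomputable def Box (m : ℝ → ℝ → ℝ → ℝ) : ℝ → ℝ → ℝ → ℝ :=
  fun t x y => -(pt (pt m) t x y) + px (px m) t x y + py (py m) t x y

noncomputable def Dmax (m : ℝ → ℝ → ℝ → ℝ) (t x y : ℝ) : ℝ :=
  max (max |pt m t x y| |px m t x y|) |py m t x y|

noncomputable def rr (x y : ℝ) : ℝ := Real.sqrt (x ^ 2 + y ^ 2)

/-! ### Auxiliary infrastructure -/

noncomputable def UC (m : ℝ → ℝ → ℝ → ℝ) : ℝ × ℝ × ℝ → ℝ := fun p => m p.1 p.2.1 p.2.2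

def ee1 : ℝ × ℝ × ℝ := (1,0,0)
def ee2 : ℝ × ℝ × ℝ := (0,1,0)
def ee3 : ℝ × ℝ × ℝ := (0,0,1)

lemma line1 (t x y : ℝ) : HasDerivAt (fun s : ℝ => (s, x, y)) ee1 t :=
  HasDerivAt.prodMk (hasDerivAt_id t) (HasDerivAt.prodMk (hasDerivAt_const t x) (hasDerivAt_const t y))

lemma line2 (t x y : ℝ) : HasDerivAt (fun s : ℝ => (t, s, y)) ee2 x :=
  HasDerivAt.prodMk (hasDerivAt_const x t) (HasDerivAt.prodMk (hasDerivAt_id x) (hasDerivAt_const x y))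

lemma line3 (t x y : ℝ) : HasDerivAt (fun s : ℝ => (t, x, s)) ee3 y :=
  HasDerivAt.prodMk (hasDerivAt_const y t) (HasDerivAt.prodMk (hasDerivAt_const y x) (hasDerivAt_id y))

lemma smooth_uc {m : ℝ → ℝ → ℝ → ℝ} (hu : IsSmoothFn m) : ContDiff ℝ (⊤ : ℕ∞) (UC m) := hu

lemma hasDerivAt_slice1 {m : ℝ → ℝ → ℝ → ℝ} (hu : IsSmoothFn m) (t x y : ℝ) :
    HasDerivAt (fun s => m s x y) (fderiv ℝ (UC m) (t,x,y) ee1) t := by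
  have h := ((smooth_uc hu).differentiable (by simp) (t,x,y)).hasFDerivAt
  simpa [Function.comp_def, UC] using h.comp_hasDerivAt t (line1 t x y)

lemma hasDerivAt_slice2 {m : ℝ → ℝ → ℝ → ℝ} (hu : IsSmoothFn m) (t x y : ℝ) :
    HasDerivAt (fun s => m t s y) (fderiv ℝ (UC m) (t,x,y) ee2) x := by
  have h := ((smooth_uc hu).differentiable (by simp) (t,x,y)).hasFDerivAt
  simpa [Function.comp_def, UC] using h.comp_hasDerivAt x (line2 t x y)

lemma hasDerivAt_slice3 {m : ℝ → ℝ → ℝ → ℝ} (hu : IsSmoothFn m) (t x y : ℝ) :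
    HasDerivAt (fun s => m t x s) (fderiv ℝ (UC m) (t,x,y) ee3) y := by
  have h := ((smooth_uc hu).differentiable (by simp) (t,x,y)).hasFDerivAt
  simpa [Function.comp_def, UC] using h.comp_hasDerivAt y (line3 t x y)

lemma pt_eq {m : ℝ → ℝ → ℝ → ℝ} (hu : IsSmoothFn m) (t x y : ℝ) :
    pt m t x y = fderiv ℝ (UC m) (t,x,y) ee1 := (hasDerivAt_slice1 hu t x y).deriv

lemma px_eq {m : ℝ → ℝ → ℝ → ℝ} (hu : IsSmoothFn m) (t x y : ℝ) :
    px m t x y = fderiv ℝ (UC m) (t,x,y) ee2 := (hasDerivAt_slice2 hu t x y).deriv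

lemma py_eq {m : ℝ → ℝ → ℝ → ℝ} (hu : IsSmoothFn m) (t x y : ℝ) :
    py m t x y = fderiv ℝ (UC m) (t,x,y) ee3 := (hasDerivAt_slice3 hu t x y).deriv

lemma smooth_app {m : ℝ → ℝ → ℝ → ℝ} (hu : IsSmoothFn m) (v : ℝ × ℝ × ℝ) :
    ContDiff ℝ (⊤ : ℕ∞) (fun p => fderiv ℝ (UC m) p v) :=
  ((smooth_uc hu).fderiv_right (by simp)).clm_apply contDiff_const

lemma smooth_pt {m : ℝ → ℝ → ℝ → ℝ} (hu : IsSmoothFn m) : IsSmoothFn (pt m) := by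
  have : (fun p : ℝ × ℝ × ℝ => pt m p.1 p.2.1 p.2.2) = fun p => fderiv ℝ (UC m) p ee1 := by
    funext p; exact pt_eq hu p.1 p.2.1 p.2.2
  unfold IsSmoothFn; rw [this]; exact smooth_app hu ee1

lemma smooth_px {m : ℝ → ℝ → ℝ → ℝ} (hu : IsSmoothFn m) : IsSmoothFn (px m) := by
  have : (fun p : ℝ × ℝ × ℝ => px m p.1 p.2.1 p.2.2) = fun p => fderiv ℝ (UC m) p ee2 := by
    funext p; exact px_eq hu p.1 p.2.1 p.2.2
  unfold IsSmoothFn; rw [this]; exact smooth_app hu ee2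

lemma smooth_py {m : ℝ → ℝ → ℝ → ℝ} (hu : IsSmoothFn m) : IsSmoothFn (py m) := by
  have : (fun p : ℝ × ℝ × ℝ => py m p.1 p.2.1 p.2.2) = fun p => fderiv ℝ (UC m) p ee3 := by
    funext p; exact py_eq hu p.1 p.2.1 p.2.2
  unfold IsSmoothFn; rw [this]; exact smooth_app hu ee3

lemma fderiv_app_eq {m : ℝ → ℝ → ℝ → ℝ} (hu : IsSmoothFn m) (v : ℝ × ℝ × ℝ) (q : ℝ × ℝ × ℝ) :
    fderiv ℝ (fun p => fderiv ℝ (UC m) p v) q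
      = (fderiv ℝ (fderiv ℝ (UC m)) q).flip v := by
  have h2 : HasFDerivAt (fderiv ℝ (UC m)) (fderiv ℝ (fderiv ℝ (UC m)) q) q :=
    (((smooth_uc hu).fderiv_right (m := (⊤ : ℕ∞)) (by simp)).differentiable (by simp) q).hasFDerivAt
  have := (h2.clm_apply (hasFDerivAt_const v q)).fderiv
  simpa using this

lemma symm2 {m : ℝ → ℝ → ℝ → ℝ} (hu : IsSmoothFn m) (q : ℝ × ℝ × ℝ) (v w : ℝ × ℝ × ℝ) :
    fderiv ℝ (fderiv ℝ (UC m)) q v w = fderiv ℝ (fderiv ℝ (UC m)) q w v := by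
  have hf : ∀ p, HasFDerivAt (UC m) (fderiv ℝ (UC m) p) p :=
    fun p => ((smooth_uc hu).differentiable (by simp) p).hasFDerivAt
  have h2 : HasFDerivAt (fderiv ℝ (UC m)) (fderiv ℝ (fderiv ℝ (UC m)) q) q :=
    (((smooth_uc hu).fderiv_right (m := (⊤ : ℕ∞)) (by simp)).differentiable (by simp) q).hasFDerivAt
  exact second_derivative_symmetric hf h2 v w

lemma pt_px_comm {m : ℝ → ℝ → ℝ → ℝ} (hu : IsSmoothFn m) (t x y : ℝ) :
    pt (px m) t x y = px (pt m) t x y := by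
  have h1 : UC (px m) = fun p => fderiv ℝ (UC m) p ee2 := by
    funext p; exact px_eq hu p.1 p.2.1 p.2.2
  have h2 : UC (pt m) = fun p => fderiv ℝ (UC m) p ee1 := by
    funext p; exact pt_eq hu p.1 p.2.1 p.2.2
  rw [pt_eq (smooth_px hu) t x y, px_eq (smooth_pt hu) t x y, h1, h2,
    fderiv_app_eq hu ee2, fderiv_app_eq hu ee1]
  exact symm2 hu (t,x,y) ee1 ee2

lemma pt_py_comm {m : ℝ → ℝ → ℝ → ℝ} (hu : IsSmoothFn m) (t x y : ℝ) :
    pt (py m) t x y = py (pt m) t x y := by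
  have h1 : UC (py m) = fun p => fderiv ℝ (UC m) p ee3 := by
    funext p; exact py_eq hu p.1 p.2.1 p.2.2
  have h2 : UC (pt m) = fun p => fderiv ℝ (UC m) p ee1 := by
    funext p; exact pt_eq hu p.1 p.2.1 p.2.2
  rw [pt_eq (smooth_py hu) t x y, py_eq (smooth_pt hu) t x y, h1, h2,
    fderiv_app_eq hu ee3, fderiv_app_eq hu ee1]
  exact symm2 hu (t,x,y) ee1 ee3

lemma hasDerivAt_pt1 {m : ℝ → ℝ → ℝ → ℝ} (hu : IsSmoothFn m) (t x y : ℝ) :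
    HasDerivAt (fun s => m s x y) (pt m t x y) t := by
  rw [pt_eq hu t x y]; exact hasDerivAt_slice1 hu t x y

lemma hasDerivAt_px2 {m : ℝ → ℝ → ℝ → ℝ} (hu : IsSmoothFn m) (t x y : ℝ) :
    HasDerivAt (fun s => m t s y) (px m t x y) x := by
  rw [px_eq hu t x y]; exact hasDerivAt_slice2 hu t x y

lemma hasDerivAt_py3 {m : ℝ → ℝ → ℝ → ℝ} (hu : IsSmoothFn m) (t x y : ℝ) :
    HasDerivAt (fun s => m t x s) (py m t x y) y := by
  rw [py_eq hu t x y]; exact hasDerivAt_slice3 hu t x y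

lemma pt_H1_eq {u : ℝ → ℝ → ℝ → ℝ} (hu : IsSmoothFn u) (t x y : ℝ) :
    pt (H1 u) t x y = px u t x y + t * pt (px u) t x y + x * pt (pt u) t x y := by
  have hg := hasDerivAt_pt1 (smooth_px hu) t x y
  have hh := hasDerivAt_pt1 (smooth_pt hu) t x y
  have h : HasDerivAt (fun s => s * px u s x y + x * pt u s x y)
      (1 * px u t x y + t * pt (px u) t x y + x * pt (pt u) t x y) t :=
    ((hasDerivAt_id t).mul hg).add (hh.const_mul x)
  have h2 : pt (H1 u) t x y = 1 * px u t x y + t * pt (px u) t x y + x * pt (pt u) t x y := by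
    simp only [pt, H1]; exact h.deriv
  rw [h2]; ring

lemma pt_H2_eq {u : ℝ → ℝ → ℝ → ℝ} (hu : IsSmoothFn u) (t x y : ℝ) :
    pt (H2 u) t x y = py u t x y + t * pt (py u) t x y + y * pt (pt u) t x y := by
  have hg := hasDerivAt_pt1 (smooth_py hu) t x y
  have hh := hasDerivAt_pt1 (smooth_pt hu) t x y
  have h : HasDerivAt (fun s => s * py u s x y + y * pt u s x y)
      (1 * py u t x y + t * pt (py u) t x y + y * pt (pt u) t x y) t :=
    ((hasDerivAt_id t).mul hg).add (hh.const_mul y)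
  have h2 : pt (H2 u) t x y = 1 * py u t x y + t * pt (py u) t x y + y * pt (pt u) t x y := by
    simp only [pt, H2]; exact h.deriv
  rw [h2]; ring

lemma px_H1_eq {u : ℝ → ℝ → ℝ → ℝ} (hu : IsSmoothFn u) (t x y : ℝ) :
    px (H1 u) t x y = t * px (px u) t x y + pt u t x y + x * px (pt u) t x y := by
  have hg := hasDerivAt_px2 (smooth_px hu) t x y
  have hh := hasDerivAt_px2 (smooth_pt hu) t x y
  have h : HasDerivAt (fun s => t * px u t s y + s * pt u t s y)
      (t * px (px u) t x y + (1 * pt u t x y + x * px (pt u) t x y)) x :=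
    (hg.const_mul t).add ((hasDerivAt_id x).mul hh)
  have h2 : px (H1 u) t x y
      = t * px (px u) t x y + (1 * pt u t x y + x * px (pt u) t x y) := by
    simp only [px, H1]; exact h.deriv
  rw [h2]; ring

lemma py_H2_eq {u : ℝ → ℝ → ℝ → ℝ} (hu : IsSmoothFn u) (t x y : ℝ) :
    py (H2 u) t x y = t * py (py u) t x y + pt u t x y + y * py (pt u) t x y := by
  have hg := hasDerivAt_py3 (smooth_py hu) t x y
  have hh := hasDerivAt_py3 (smooth_pt hu) t x y
  have h : HasDerivAt (fun s => t * py u t x s + s * pt u t x s)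
      (t * py (py u) t x y + (1 * pt u t x y + y * py (pt u) t x y)) y :=
    (hg.const_mul t).add ((hasDerivAt_id y).mul hh)
  have h2 : py (H2 u) t x y
      = t * py (py u) t x y + (1 * pt u t x y + y * py (pt u) t x y) := by
    simp only [py, H2]; exact h.deriv
  rw [h2]; ring

lemma abs_pt_le (m : ℝ → ℝ → ℝ → ℝ) (t x y : ℝ) : |pt m t x y| ≤ Dmax m t x y :=
  (le_max_left _ _).trans (le_max_left _ _)

lemma abs_px_le (m : ℝ → ℝ → ℝ → ℝ) (t x y : ℝ) : |px m t x y| ≤ Dmax m t x y :=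
  (le_max_right _ _).trans (le_max_left _ _)

lemma abs_py_le (m : ℝ → ℝ → ℝ → ℝ) (t x y : ℝ) : |py m t x y| ≤ Dmax m t x y :=
  le_max_right _ _

lemma Dmax_nonneg (m : ℝ → ℝ → ℝ → ℝ) (t x y : ℝ) : 0 ≤ Dmax m t x y :=
  (abs_nonneg _).trans (abs_pt_le m t x y)

set_option maxHeartbeats 2000000 in
theorem Hessian_extra_decay :
    ∃ C : ℝ, 0 < C ∧ ∀ u f : ℝ → ℝ → ℝ → ℝ, IsSmoothFn u →
      (∀ t x y : ℝ, -(Box u t x y) = f t x y) →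
      ∀ t x y : ℝ, 1 ≤ t → rr x y ≤ 2 * t →
        (-(Box u t x y)
          = ((t - rr x y) * (t + rr x y) / t ^ 2) * pt (pt u) t x y
            + (x / t ^ 2) * pt (H1 u) t x y + (y / t ^ 2) * pt (H2 u) t x y
            - (1 / t) * (px (H1 u) t x y + py (H2 u) t x y)
            + (2 / t) * pt u t x y
            - (x / t ^ 2) * px u t x y - (y / t ^ 2) * py u t x y) ∧
        |pt (pt u) t x y|
          ≤ C * ((Real.sqrt (1 + (rr x y - t) ^ 2))⁻¹
                  * (Dmax u t x y + Dmax (pd 0 u) t x y + Dmax (pd 1 u) t x y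
                      + Dmax (pd 2 u) t x y + Dmax (Om u) t x y
                      + Dmax (H1 u) t x y + Dmax (H2 u) t x y)
                + t ^ 2 / (Real.sqrt (1 + (rr x y - t) ^ 2)
                            * Real.sqrt (1 + (rr x y + t) ^ 2)) * |f t x y|) := by
  refine ⟨100, by norm_num, ?_⟩
  intro u f hu heq t x y ht hrt
  have ht0 : (0:ℝ) < t := lt_of_lt_of_le one_pos ht
  set r := rr x y with hr'
  have hr0 : 0 ≤ r := Real.sqrt_nonneg _
  have hr2 : r ^ 2 = x ^ 2 + y ^ 2 := Real.sq_sqrt (by positivity)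
  have hident : -(Box u t x y)
      = ((t - r) * (t + r) / t ^ 2) * pt (pt u) t x y
        + (x / t ^ 2) * pt (H1 u) t x y + (y / t ^ 2) * pt (H2 u) t x y
        - (1 / t) * (px (H1 u) t x y + py (H2 u) t x y)
        + (2 / t) * pt u t x y
        - (x / t ^ 2) * px u t x y - (y / t ^ 2) * py u t x y := by
    have hBox : Box u t x y
        = -(pt (pt u) t x y) + px (px u) t x y + py (py u) t x y := rfl
    have hD : (t - r) * (t + r) = t ^ 2 - (x ^ 2 + y ^ 2) := by rw [← hr2]; ring
    rw [hBox, pt_H1_eq hu, pt_H2_eq hu, px_H1_eq hu, py_H2_eq hu,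
      ← pt_px_comm hu, ← pt_py_comm hu, hD]
    field_simp
    ring
  refine ⟨hident, ?_⟩
  -- abbreviations
  have hf' : f t x y = pt (pt u) t x y - px (px u) t x y - py (py u) t x y := by
    have h := heq t x y
    have hBox : Box u t x y
        = -(pt (pt u) t x y) + px (px u) t x y + py (py u) t x y := rfl
    rw [hBox] at h; linarith only [h]
  have eq2 : (t ^ 2 - r ^ 2) * pt (pt u) t x y
      = t ^ 2 * f t x y - x * pt (H1 u) t x y - y * pt (H2 u) t x y
        + t * (px (H1 u) t x y + py (H2 u) t x y) - 2 * t * pt u t x y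
        + x * px u t x y + y * py u t x y := by
    rw [pt_H1_eq hu, pt_H2_eq hu, px_H1_eq hu, py_H2_eq hu,
      ← pt_px_comm hu, ← pt_py_comm hu, hf', hr2]
    ring
  have hxr : |x| ≤ r := by
    rw [hr', rr, ← Real.sqrt_sq_eq_abs]
    exact Real.sqrt_le_sqrt (by linarith only [sq_nonneg y])
  have hyr : |y| ≤ r := by
    rw [hr', rr, ← Real.sqrt_sq_eq_abs]
    exact Real.sqrt_le_sqrt (by linarith only [sq_nonneg x])
  have hx2t : |x| ≤ 2 * t := hxr.trans hrt
  have hy2t : |y| ≤ 2 * t := hyr.trans hrt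
  set Du := Dmax u t x y with hDu
  set D0 := Dmax (pd 0 u) t x y with hD0
  set D1 := Dmax (pd 1 u) t x y with hD1
  set D2 := Dmax (pd 2 u) t x y with hD2
  set DOm := Dmax (Om u) t x y with hDOm
  set DH1 := Dmax (H1 u) t x y with hDH1
  set DH2 := Dmax (H2 u) t x y with hDH2
  have hDu0 : 0 ≤ Du := Dmax_nonneg _ _ _ _
  have hD00 : 0 ≤ D0 := Dmax_nonneg _ _ _ _
  have hD10 : 0 ≤ D1 := Dmax_nonneg _ _ _ _
  have hD20 : 0 ≤ D2 := Dmax_nonneg _ _ _ _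
  have hDOm0 : 0 ≤ DOm := Dmax_nonneg _ _ _ _
  have hDH10 : 0 ≤ DH1 := Dmax_nonneg _ _ _ _
  have hDH20 : 0 ≤ DH2 := Dmax_nonneg _ _ _ _
  -- term bounds
  have hb1 : |x * pt (H1 u) t x y| ≤ 2 * t * DH1 := by
    rw [abs_mul]
    exact mul_le_mul hx2t (abs_pt_le _ _ _ _) (abs_nonneg _) (by linarith)
  have hb2 : |y * pt (H2 u) t x y| ≤ 2 * t * DH2 := by
    rw [abs_mul]
    exact mul_le_mul hy2t (abs_pt_le _ _ _ _) (abs_nonneg _) (by linarith)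
  have hb3 : |t * (px (H1 u) t x y + py (H2 u) t x y)| ≤ t * (DH1 + DH2) := by
    rw [abs_mul, abs_of_pos ht0]
    refine mul_le_mul_of_nonneg_left ?_ ht0.le
    exact (abs_add_le _ _).trans (add_le_add (abs_px_le _ _ _ _) (abs_py_le _ _ _ _))
  have hb4 : |2 * t * pt u t x y| ≤ 2 * t * Du := by
    rw [abs_mul, abs_of_pos (by linarith : (0:ℝ) < 2 * t)]
    exact mul_le_mul_of_nonneg_left (abs_pt_le _ _ _ _) (by linarith)
  have hb5 : |x * px u t x y| ≤ 2 * t * Du := by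
    rw [abs_mul]
    exact mul_le_mul hx2t (abs_px_le _ _ _ _) (abs_nonneg _) (by linarith)
  have hb6 : |y * py u t x y| ≤ 2 * t * Du := by
    rw [abs_mul]
    exact mul_le_mul hy2t (abs_py_le _ _ _ _) (abs_nonneg _) (by linarith)
  have hb0 : |t ^ 2 * f t x y| = t ^ 2 * |f t x y| := by
    rw [abs_mul, abs_of_pos (by positivity : (0:ℝ) < t ^ 2)]
  -- key estimate
  have key : |t ^ 2 - r ^ 2| * |pt (pt u) t x y|
      ≤ t ^ 2 * |f t x y| + 6 * t * (Du + D0 + D1 + D2 + DOm + DH1 + DH2) := by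
    rw [← abs_mul, eq2]
    have e1 := abs_le.mp hb1
    have e2 := abs_le.mp hb2
    have e3 := abs_le.mp hb3
    have e4 := abs_le.mp hb4
    have e5 := abs_le.mp hb5
    have e6 := abs_le.mp hb6
    have e0 : -(t ^ 2 * |f t x y|) ≤ t ^ 2 * f t x y ∧ t ^ 2 * f t x y ≤ t ^ 2 * |f t x y| := by
      constructor
      · rw [← hb0]; exact neg_abs_le _
      · rw [← hb0]; exact le_abs_self _
    have hprod : 0 ≤ t * Du ∧ 0 ≤ t * D0 ∧ 0 ≤ t * D1 ∧ 0 ≤ t * D2 ∧ 0 ≤ t * DOm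
        ∧ 0 ≤ t * DH1 ∧ 0 ≤ t * DH2 :=
      ⟨mul_nonneg ht0.le hDu0, mul_nonneg ht0.le hD00, mul_nonneg ht0.le hD10,
        mul_nonneg ht0.le hD20, mul_nonneg ht0.le hDOm0, mul_nonneg ht0.le hDH10,
        mul_nonneg ht0.le hDH20⟩
    obtain ⟨p1, p2, p3, p4, p5, p6, p7⟩ := hprod
    refine abs_le.mpr ⟨by
      linarith only [e0.1, e0.2, e1.1, e1.2, e2.1, e2.2, e3.1, e3.2, e4.1, e4.2,
        e5.1, e5.2, e6.1, e6.2, p1, p2, p3, p4, p5, p6, p7], by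
      linarith only [e0.1, e0.2, e1.1, e1.2, e2.1, e2.2, e3.1, e3.2, e4.1, e4.2,
        e5.1, e5.2, e6.1, e6.2, p1, p2, p3, p4, p5, p6, p7]⟩
  -- square-root quantities
  set A := Real.sqrt (1 + (r - t) ^ 2) with hA'
  set B := Real.sqrt (1 + (r + t) ^ 2) with hB'
  have hA0 : 0 < A := Real.sqrt_pos.mpr (by positivity)
  have hB0 : 0 < B := Real.sqrt_pos.mpr (by positivity)
  have hA2 : A ^ 2 = 1 + (r - t) ^ 2 := Real.sq_sqrt (by positivity)
  have hB2 : B ^ 2 = 1 + (r + t) ^ 2 := Real.sq_sqrt (by positivity)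
  have htB : t ≤ B := by
    have h1 : t = Real.sqrt (t ^ 2) := (Real.sqrt_sq ht0.le).symm
    rw [h1, hB']
    exact Real.sqrt_le_sqrt (by linarith only [sq_nonneg r, mul_nonneg hr0 ht0.le])
  set S := Du + D0 + D1 + D2 + DOm + DH1 + DH2 with hS'
  have hS0 : 0 ≤ S := by simp only [hS']; linarith
  have main : |pt (pt u) t x y| * (A * B) ≤ 100 * (B * S + t ^ 2 * |f t x y|) := by
    rcases le_or_gt ((r - t) ^ 2) 1 with hsmall | hbig
    · -- near the light cone: trivial bound
      have hAle : A ≤ 2 := by linarith only [sq_nonneg (A - 2), hA2, hsmall]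
      have haS : |pt (pt u) t x y| ≤ S := by
        have h1 : |pt (pt u) t x y| ≤ D0 := by
          rw [hD0]; exact abs_pt_le (pd 0 u) t x y
        simp only [hS']
        linarith only [h1, hDu0, hD10, hD20, hDOm0, hDH10, hDH20]
      have h2 : |pt (pt u) t x y| * (A * B) ≤ S * (2 * B) := by
        have hAB : A * B ≤ 2 * B := mul_le_mul_of_nonneg_right hAle hB0.le
        exact mul_le_mul haS hAB (by positivity) hS0
      have h3 : 0 ≤ B * S := mul_nonneg hB0.le hS0
      have h4 : 0 ≤ t ^ 2 * |f t x y| := by positivity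
      nlinarith only [h2, h3, h4]
    · -- away from the light cone
      have hq : 1 ≤ (r + t) ^ 2 := by
        have hh := mul_nonneg (by linarith only [hr0, ht] : (0:ℝ) ≤ r + t - 1)
          (by linarith only [hr0, ht] : (0:ℝ) ≤ r + t + 1)
        linarith only [hh]
      have hD2eq : (t ^ 2 - r ^ 2) ^ 2 = (r - t) ^ 2 * (r + t) ^ 2 := by ring
      have hsq : (A * B) ^ 2 ≤ (2 * |t ^ 2 - r ^ 2|) ^ 2 := by
        rw [mul_pow, mul_pow, sq_abs, hA2, hB2, hD2eq]
        have haux : ∀ p q : ℝ, 1 ≤ p → 1 ≤ q → (1 + p) * (1 + q) ≤ 4 * (p * q) := by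
          intro p q hp hq
          nlinarith only [hp, hq, mul_nonneg (by linarith only [hp] : (0:ℝ) ≤ p - 1)
            (by linarith only [hq] : (0:ℝ) ≤ q - 1)]
        have := haux _ _ hbig.le hq
        linarith only [this]
      have hABD : A * B ≤ 2 * |t ^ 2 - r ^ 2| := by
        have := Real.sqrt_le_sqrt hsq
        rwa [Real.sqrt_sq (by positivity), Real.sqrt_sq (by positivity)] at this
      have c1 : |pt (pt u) t x y| * (A * B) ≤ |pt (pt u) t x y| * (2 * |t ^ 2 - r ^ 2|) :=
        mul_le_mul_of_nonneg_left hABD (abs_nonneg _)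
      have c4 : t * S ≤ B * S := mul_le_mul_of_nonneg_right htB hS0
      have h3 : 0 ≤ B * S := mul_nonneg hB0.le hS0
      have h4 : 0 ≤ t ^ 2 * |f t x y| := by positivity
      nlinarith only [key, c1, c4, h3, h4]
  have hABpos : (0:ℝ) < A * B := mul_pos hA0 hB0
  have hfinal : 100 * (A⁻¹ * S + t ^ 2 / (A * B) * |f t x y|)
      = 100 * (B * S + t ^ 2 * |f t x y|) / (A * B) := by
    field_simp
  rw [hfinal, le_div_iff₀ hABpos]
  exact main
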